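/- Let Q be an integer with ⌈1+n/2⌉ ≤ Q ≤ n and let c ∈ X be any point. Then every v ∈ V with dist(c,v) ≤ m_Q(c) satisfies m_Q(v) ≤ 2·m_Q(c), and there are at least Q such points v ∈ V. In particular, at least half the points of V satisfy m_Q(v) ≤ 2·m_Q(c). -/

import Mathlib

/-!
The ball `B(c, m_Q(c))` contains at least `Q` points of `V`, and for `v` in it the triangle
inequality puts that whole ball inside `B(v, 2 m_Q(c))`, so `m_Q(v) ≤ 2 m_Q(c)`. Since
`Q > n/2`, these `Q` points form at least half of `V`.
-/

open Finset

/-- The `Q`-quantile distance of `u` to the finite point set `V`: the smallest radius `r`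
such that the closed ball of radius `r` around `u` contains at least `Q` points of `V`. -/
noncomputable def medDist {X : Type*} [MetricSpace X] (V : Finset X) (Q : ℕ) (u : X) : ℝ :=
  sInf {r : ℝ | Q ≤ (V.filter fun v => dist u v ≤ r).card}

section QuantileDistance

variable {X : Type*} [MetricSpace X] (V : Finset X) {Q : ℕ} (u : X)

/-- The admissible radii form a finite union of closed half-lines, one per `Q`-subset of `V`,
so the infimum defining `medDist` is attained. -/
lemma isClosed_setOf_le_card_filter_dist_le :
    IsClosed {r : ℝ | Q ≤ #(V.filter fun v => dist u v ≤ r)} := by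
  have hunion : {r : ℝ | Q ≤ #(V.filter fun v => dist u v ≤ r)} =
      ⋃ s ∈ V.powersetCard Q, ⋂ v ∈ s, Set.Ici (dist u v) := by
    ext r
    simp only [Set.mem_ofPred_eq, Set.mem_iUnion, Set.mem_iInter, Set.mem_Ici, mem_powersetCard,
      exists_prop]
    constructor
    · intro h
      obtain ⟨s, hs, rfl⟩ := exists_subset_card_eq h
      exact ⟨s, ⟨hs.trans (filter_subset _ _), rfl⟩, fun v hv => (mem_filter.1 (hs hv)).2⟩
    · rintro ⟨s, ⟨hsV, rfl⟩, hs⟩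
      exact card_le_card fun v hv => mem_filter.2 ⟨hsV hv, hs v hv⟩
  rw [hunion]
  exact isClosed_biUnion_finset fun s _ => isClosed_biInter fun v _ => isClosed_Ici

lemma bddBelow_setOf_le_card_filter_dist_le (hQ : 0 < Q) :
    BddBelow {r : ℝ | Q ≤ #(V.filter fun v => dist u v ≤ r)} := by
  refine ⟨0, fun r hr => ?_⟩
  obtain ⟨v, hv⟩ := card_pos.1 (hQ.trans_le hr)
  exact dist_nonneg.trans (mem_filter.1 hv).2

lemma nonempty_setOf_le_card_filter_dist_le (hQV : Q ≤ #V) :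
    {r : ℝ | Q ≤ #(V.filter fun v => dist u v ≤ r)}.Nonempty := by
  refine ⟨∑ v ∈ V, dist u v, ?_⟩
  have hall : V.filter (fun v => dist u v ≤ ∑ w ∈ V, dist u w) = V :=
    filter_true_of_mem fun v hv => single_le_sum (f := dist u) (fun w _ => dist_nonneg) hv
  rwa [Set.mem_ofPred_eq, hall]

lemma medDist_le_of_le_card (hQ : 0 < Q) {r : ℝ}
    (hr : Q ≤ #(V.filter fun v => dist u v ≤ r)) : medDist V Q u ≤ r :=
  csInf_le (bddBelow_setOf_le_card_filter_dist_le V u hQ) hr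

lemma le_card_filter_dist_le_medDist (hQ : 0 < Q) (hQV : Q ≤ #V) :
    Q ≤ #(V.filter fun v => dist u v ≤ medDist V Q u) :=
  (isClosed_setOf_le_card_filter_dist_le V u).csInf_mem
    (nonempty_setOf_le_card_filter_dist_le V u hQV) (bddBelow_setOf_le_card_filter_dist_le V u hQ)

lemma medDist_le_two_mul_of_dist_le (hQ : 0 < Q) (hQV : Q ≤ #V) {c v : X}
    (hv : dist c v ≤ medDist V Q c) : medDist V Q v ≤ 2 * medDist V Q c := by
  refine medDist_le_of_le_card V v hQ <|
    (le_card_filter_dist_le_medDist V c hQ hQV).trans <| card_le_card fun w hw => ?_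
  rw [mem_filter] at hw ⊢
  refine ⟨hw.1, ?_⟩
  calc dist v w ≤ dist c v + dist c w := dist_triangle_left v w c
    _ ≤ 2 * medDist V Q c := by linarith [hw.2]

end QuantileDistance

/-- Let `⌈1+n/2⌉ ≤ Q ≤ n` and let `c` be any point of the space. Then
every `v ∈ V` with `dist c v ≤ m_Q(c)` satisfies `m_Q(v) ≤ 2·m_Q(c)`, and there are at
least `Q` such points `v ∈ V`; in particular at least half the points of `V` satisfy
`m_Q(v) ≤ 2·m_Q(c)`. -/
theorem stmt17 {X : Type*} [MetricSpace X] (V : Finset X) (Q : ℕ)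
    (hQlo : (V.card + 1) / 2 + 1 ≤ Q) (hQhi : Q ≤ V.card) (c : X) :
    (∀ v ∈ V, dist c v ≤ medDist V Q c → medDist V Q v ≤ 2 * medDist V Q c) ∧
      Q ≤ (V.filter fun v => dist c v ≤ medDist V Q c).card ∧
        V.card ≤ 2 * (V.filter fun v => medDist V Q v ≤ 2 * medDist V Q c).card := by
  have hQ : 0 < Q := by omega
  have hball := le_card_filter_dist_le_medDist V c hQ hQhi
  have hnear : ∀ v ∈ V, dist c v ≤ medDist V Q c → medDist V Q v ≤ 2 * medDist V Q c :=
    fun v _ hv => medDist_le_two_mul_of_dist_le V hQ hQhi hv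
  have hgood : Q ≤ #(V.filter fun v => medDist V Q v ≤ 2 * medDist V Q c) :=
    hball.trans <| card_le_card fun v hv => by
      rw [mem_filter] at hv ⊢
      exact ⟨hv.1, hnear v hv.1 hv.2⟩
  exact ⟨hnear, hball, by omega⟩
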